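/- arXiv:1606.03984 — 2 statements merged into one kernel-verified Lean document; each statement's English description precedes it below -/
import Mathlib

section
/- Let N = {i₁,…,iₙ} be a finite set of indices and X a team on N. For every team Y on N, Y ⊨ Θ*_X if and only if Y = X. -/
/-- Formulas of full propositional team logic (FPT), with propositional
variables indexed by a type `V`. -/
inductive PTForm (V : Type) : Type where
  | pos : V → PTForm V
  | neg : V → PTForm V
  | bot : PTForm V
  | ne : PTForm V
  | dep : List V → V → PTForm V
  | indep : List V → List V → PTForm V
  | incl : List V → List V → PTForm V
  | and : PTForm V → PTForm V → PTForm V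
  | tensor : PTForm V → PTForm V → PTForm V
  | nsor : PTForm V → PTForm V → PTForm V
  | bor : PTForm V → PTForm V → PTForm V

/-- Team semantics of full propositional team logic.  A valuation is a
function `V → Bool` and a team is a set of valuations. -/
def PTSat {V : Type} (X : Set (V → Bool)) : PTForm V → Prop
  | .pos i => ∀ s ∈ X, s i = true
  | .neg i => ∀ s ∈ X, s i = false
  | .bot => X = ∅
  | .ne => X ≠ ∅
  | .dep xs y => ∀ s ∈ X, ∀ s' ∈ X, (∀ i ∈ xs, s i = s' i) → s y = s' y
  | .indep xs ys =>
      ∀ s ∈ X, ∀ s' ∈ X, ∃ s'' ∈ X,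
        (∀ i ∈ xs, s'' i = s i) ∧ (∀ j ∈ ys, s'' j = s' j)
  | .incl xs ys => ∀ s ∈ X, ∃ s' ∈ X, ∀ p ∈ List.zip xs ys, s p.1 = s' p.2
  | .and φ ψ => PTSat X φ ∧ PTSat X ψ
  | .tensor φ ψ => ∃ Y Z, X = Y ∪ Z ∧ PTSat Y φ ∧ PTSat Z ψ
  | .nsor φ ψ =>
      X = ∅ ∨ ∃ Y Z, X = Y ∪ Z ∧ Y.Nonempty ∧ Z.Nonempty ∧ PTSat Y φ ∧ PTSat Z ψ
  | .bor φ ψ => PTSat X φ ∨ PTSat X ψ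

/-- The set of propositional variables occurring in a formula. -/
def PTForm.vars {V : Type} : PTForm V → Set V
  | .pos i => {i}
  | .neg i => {i}
  | .bot => ∅
  | .ne => ∅
  | .dep xs y => {i | i ∈ xs} ∪ {y}
  | .indep xs ys => {i | i ∈ xs} ∪ {j | j ∈ ys}
  | .incl xs ys => {i | i ∈ xs} ∪ {j | j ∈ ys}
  | .and φ ψ => φ.vars ∪ ψ.vars
  | .tensor φ ψ => φ.vars ∪ ψ.vars
  | .nsor φ ψ => φ.vars ∪ ψ.vars
  | .bor φ ψ => φ.vars ∪ ψ.vars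

/-- The formula does not contain the atom NE. -/
def PTForm.NEfree {V : Type} : PTForm V → Prop
  | .ne => False
  | .and φ ψ => φ.NEfree ∧ ψ.NEfree
  | .tensor φ ψ => φ.NEfree ∧ ψ.NEfree
  | .nsor φ ψ => φ.NEfree ∧ ψ.NEfree
  | .bor φ ψ => φ.NEfree ∧ ψ.NEfree
  | _ => True

/-- Classical formulas: built from `pᵢ`, `¬pᵢ`, `⊥` using only `∧` and `⊗`. -/
inductive IsClassical {V : Type} : PTForm V → Prop where
  | pos (i : V) : IsClassical (.pos i)
  | neg (i : V) : IsClassical (.neg i)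
  | bot : IsClassical .bot
  | and : ∀ {φ ψ}, IsClassical φ → IsClassical ψ → IsClassical (.and φ ψ)
  | tensor : ∀ {φ ψ}, IsClassical φ → IsClassical ψ → IsClassical (.tensor φ ψ)

/-- The language of strong propositional team logic PT⁺:
atoms `pᵢ`, `¬pᵢ`, `⊥`, `NE` and connectives `∧`, `⊗`, `∨`. -/
inductive IsPTPlus {V : Type} : PTForm V → Prop where
  | pos (i : V) : IsPTPlus (.pos i)
  | neg (i : V) : IsPTPlus (.neg i)
  | bot : IsPTPlus .bot
  | ne : IsPTPlus .ne
  | and : ∀ {φ ψ}, IsPTPlus φ → IsPTPlus ψ → IsPTPlus (.and φ ψ)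
  | tensor : ∀ {φ ψ}, IsPTPlus φ → IsPTPlus ψ → IsPTPlus (.tensor φ ψ)
  | bor : ∀ {φ ψ}, IsPTPlus φ → IsPTPlus ψ → IsPTPlus (.bor φ ψ)

/-- The language of propositional team logic PT:
atoms `pᵢ`, `¬pᵢ`, `⊥` and connectives `∧`, `⊛`, `∨`. -/
inductive IsPT {V : Type} : PTForm V → Prop where
  | pos (i : V) : IsPT (.pos i)
  | neg (i : V) : IsPT (.neg i)
  | bot : IsPT .bot
  | and : ∀ {φ ψ}, IsPT φ → IsPT ψ → IsPT (.and φ ψ)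
  | nsor : ∀ {φ ψ}, IsPT φ → IsPT ψ → IsPT (.nsor φ ψ)
  | bor : ∀ {φ ψ}, IsPT φ → IsPT ψ → IsPT (.bor φ ψ)

/-- The language of propositional union closed logic PU:
atoms `pᵢ`, `¬pᵢ`, `⊥` and connectives `∧`, `⊗`, `⊛`. -/
inductive IsPU {V : Type} : PTForm V → Prop where
  | pos (i : V) : IsPU (.pos i)
  | neg (i : V) : IsPU (.neg i)
  | bot : IsPU .bot
  | and : ∀ {φ ψ}, IsPU φ → IsPU ψ → IsPU (.and φ ψ)
  | tensor : ∀ {φ ψ}, IsPU φ → IsPU ψ → IsPU (.tensor φ ψ)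
  | nsor : ∀ {φ ψ}, IsPU φ → IsPU ψ → IsPU (.nsor φ ψ)

/-- The language of strong propositional union closed logic PU⁺:
atoms `pᵢ`, `¬pᵢ`, `⊥`, `NE` and connectives `∧`, `⊗`, `⊛`. -/
inductive IsPUPlus {V : Type} : PTForm V → Prop where
  | pos (i : V) : IsPUPlus (.pos i)
  | neg (i : V) : IsPUPlus (.neg i)
  | bot : IsPUPlus .bot
  | ne : IsPUPlus .ne
  | and : ∀ {φ ψ}, IsPUPlus φ → IsPUPlus ψ → IsPUPlus (.and φ ψ)
  | tensor : ∀ {φ ψ}, IsPUPlus φ → IsPUPlus ψ → IsPUPlus (.tensor φ ψ)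
  | nsor : ∀ {φ ψ}, IsPUPlus φ → IsPUPlus ψ → IsPUPlus (.nsor φ ψ)

/-- The atom-free team language: atoms `pᵢ`, `¬pᵢ`, `⊥`, `NE` and
connectives `∧`, `⊗`, `⊛`, `∨` (no dependence/independence/inclusion atoms). -/
inductive IsAtomFree {V : Type} : PTForm V → Prop where
  | pos (i : V) : IsAtomFree (.pos i)
  | neg (i : V) : IsAtomFree (.neg i)
  | bot : IsAtomFree .bot
  | ne : IsAtomFree .ne
  | and : ∀ {φ ψ}, IsAtomFree φ → IsAtomFree ψ → IsAtomFree (.and φ ψ)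
  | tensor : ∀ {φ ψ}, IsAtomFree φ → IsAtomFree ψ → IsAtomFree (.tensor φ ψ)
  | nsor : ∀ {φ ψ}, IsAtomFree φ → IsAtomFree ψ → IsAtomFree (.nsor φ ψ)
  | bor : ∀ {φ ψ}, IsAtomFree φ → IsAtomFree ψ → IsAtomFree (.bor φ ψ)

/-- The literal `pᵢ^{s(i)}`, i.e. `pᵢ` if `s i = 1` and `¬pᵢ` if `s i = 0`. -/
def PTlit {V : Type} (s : V → Bool) (i : V) : PTForm V :=
  if s i then .pos i else .neg i

/-- Conjunction of a nonempty list headed by the first argument. -/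
def PTandAux {V : Type} : PTForm V → List (PTForm V) → PTForm V
  | φ, [] => φ
  | φ, ψ :: l => .and φ (PTandAux ψ l)

/-- Conjunction of a list of formulas (only used on nonempty lists). -/
def PTandList {V : Type} : List (PTForm V) → PTForm V
  | [] => .bot
  | φ :: l => PTandAux φ l

/-- The formula `p_{i₁}^{s(i₁)} ∧ … ∧ p_{iₙ}^{s(iₙ)}` describing the
valuation `s`, where `{i₁, …, iₙ}` enumerates all of `V`. -/
noncomputable def PTdescr {V : Type} [Fintype V] (s : V → Bool) : PTForm V :=
  PTandList ((Finset.univ : Finset V).toList.map (PTlit s))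

/-- Tensor disjunction `⊗` of a list of formulas; the empty tensor
disjunction is `⊥`. -/
def PTtensorList {V : Type} (l : List (PTForm V)) : PTForm V :=
  l.foldr PTForm.tensor PTForm.bot

/-- Nonempty disjunction `⊛` of a nonempty list headed by the first argument. -/
def PTnsorAux {V : Type} : PTForm V → List (PTForm V) → PTForm V
  | φ, [] => φ
  | φ, ψ :: l => .nsor φ (PTnsorAux ψ l)

/-- Nonempty disjunction `⊛` of a list of formulas; the empty nonempty
disjunction is `⊥`. -/
def PTnsorList {V : Type} : List (PTForm V) → PTForm V
  | [] => .bot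
  | φ :: l => PTnsorAux φ l

/-- Boolean disjunction `∨` of a list of formulas; the empty Boolean
disjunction is `⊥ ∧ NE`. -/
def PTborList {V : Type} (l : List (PTForm V)) : PTForm V :=
  l.foldr PTForm.bor (PTForm.and PTForm.bot PTForm.ne)

/-- The formula `Θ_X := ⊗_{s∈X} (p_{i₁}^{s(i₁)} ∧ … ∧ p_{iₙ}^{s(iₙ)})`. -/
noncomputable def PTtheta {V : Type} [Fintype V] (X : Finset (V → Bool)) : PTForm V :=
  PTtensorList (X.toList.map PTdescr)

/-- The formula `Θ*_X := ⊗_{s∈X} (p_{i₁}^{s(i₁)} ∧ … ∧ p_{iₙ}^{s(iₙ)} ∧ NE)`. -/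
noncomputable def PTthetaStar {V : Type} [Fintype V] (X : Finset (V → Bool)) : PTForm V :=
  PTtensorList (X.toList.map (fun s => .and (PTdescr s) .ne))

/-- The formula `Θ**_X := ⊛_{s∈X} (p_{i₁}^{s(i₁)} ∧ … ∧ p_{iₙ}^{s(iₙ)})`. -/
noncomputable def PTthetaSS {V : Type} [Fintype V] (X : Finset (V → Bool)) : PTForm V :=
  PTnsorList (X.toList.map PTdescr)

/-- Logical consequence: every team satisfying all formulas of `Γ`
satisfies `φ`. -/
def PTEntails {V : Type} (Γ : Set (PTForm V)) (φ : PTForm V) : Prop :=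
  ∀ X : Set (V → Bool), (∀ ψ ∈ Γ, PTSat X ψ) → PTSat X φ

/-- A team property is flat if a team is in it iff all its singleton
subteams are. -/
def IsFlat {V : Type} (P : Set (Set (V → Bool))) : Prop :=
  ∀ X : Set (V → Bool), X ∈ P ↔ ∀ s ∈ X, ({s} : Set (V → Bool)) ∈ P

/-- A team property is union closed if it is closed under unions of
nonempty subfamilies. -/
def IsUnionClosed {V : Type} (P : Set (Set (V → Bool))) : Prop :=
  ∀ 𝒳 ⊆ P, 𝒳.Nonempty → ⋃₀ 𝒳 ∈ P

/-- The syntactic De Morgan negation of a classical formula. -/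
def PTdeMorgan : PTForm ℕ → PTForm ℕ
  | .pos i => .neg i
  | .neg i => .pos i
  | .bot => .tensor (.pos 0) (.neg 0)
  | .and φ ψ => .tensor (PTdeMorgan φ) (PTdeMorgan ψ)
  | .tensor φ ψ => .and (PTdeMorgan φ) (PTdeMorgan ψ)
  | φ => φ

/-- Application of a substitution `σ` (assigning a formula to each
propositional variable) to a formula of the atom-free team language. -/
def PTsubst (σ : ℕ → PTForm ℕ) : PTForm ℕ → PTForm ℕ
  | .pos i => σ i
  | .neg i => PTdeMorgan (σ i)
  | .and φ ψ => .and (PTsubst σ φ) (PTsubst σ ψ)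
  | .tensor φ ψ => .tensor (PTsubst σ φ) (PTsubst σ ψ)
  | .nsor φ ψ => .nsor (PTsubst σ φ) (PTsubst σ ψ)
  | .bor φ ψ => .bor (PTsubst σ φ) (PTsubst σ ψ)
  | φ => φ

open Classical in
/-- The valuation `s_σ`, with `s_σ(i) = 1` iff `{s} ⊨ σ(pᵢ)`. -/
noncomputable def PTvalSubst (σ : ℕ → PTForm ℕ) (s : ℕ → Bool) : ℕ → Bool :=
  fun i => if PTSat {s} (σ i) then true else false
lemma PTSat_andAux {V : Type} (Y : Set (V → Bool)) (φ : PTForm V) (l : List (PTForm V)) :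
    PTSat Y (PTandAux φ l) ↔ PTSat Y φ ∧ ∀ ψ ∈ l, PTSat Y ψ := by
  induction l generalizing φ with
  | nil => simp [PTandAux]
  | cons ψ l ih =>
    simp only [PTandAux, PTSat, ih, List.mem_cons]
    constructor
    · rintro ⟨h1, h2, h3⟩
      exact ⟨h1, fun χ hχ => hχ.elim (fun e => e ▸ h2) (h3 χ)⟩
    · rintro ⟨h1, h2⟩
      exact ⟨h1, h2 ψ (Or.inl rfl), fun χ hχ => h2 χ (Or.inr hχ)⟩

lemma PTSat_lit {V : Type} (Y : Set (V → Bool)) (s : V → Bool) (i : V) :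
    PTSat Y (PTlit s i) ↔ ∀ t ∈ Y, t i = s i := by
  unfold PTlit
  cases h : s i <;> simp [PTSat, h]

lemma PTSat_descr {V : Type} [Fintype V] [Nonempty V] (Y : Set (V → Bool))
    (s : V → Bool) : PTSat Y (PTdescr s) ↔ ∀ t ∈ Y, t = s := by
  unfold PTdescr
  have hne : (Finset.univ : Finset V).toList ≠ [] := by
    simp [Finset.toList_eq_nil]
    exact Finset.univ_nonempty.ne_empty
  obtain ⟨i, l, hil⟩ := List.exists_cons_of_ne_nil hne
  rw [hil]
  simp only [List.map_cons, PTandList, PTSat_andAux, PTSat_lit, List.mem_map]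
  constructor
  · rintro ⟨h1, h2⟩ t ht
    funext j
    have hj : j ∈ (Finset.univ : Finset V).toList := by simp [Finset.mem_toList]
    rw [hil] at hj
    rcases List.mem_cons.mp hj with h | h
    · exact h ▸ h1 t ht
    · have := h2 _ ⟨j, h, rfl⟩
      rw [PTSat_lit] at this
      exact this t ht
  · rintro h
    refine ⟨fun t ht => by rw [h t ht], ?_⟩
    rintro ψ ⟨j, hj, rfl⟩
    rw [PTSat_lit]
    exact fun t ht => by rw [h t ht]

lemma PTSat_thetaStar_list {V : Type} [Fintype V] [Nonempty V]
    (L : List (V → Bool)) (Y : Set (V → Bool)) :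
    PTSat Y (PTtensorList (L.map (fun s => .and (PTdescr s) .ne))) ↔
      Y = {t | t ∈ L} := by
  induction L generalizing Y with
  | nil =>
    simp only [List.map_nil, PTtensorList, List.foldr_nil, PTSat]
    constructor
    · rintro rfl; ext t; simp
    · intro h; rw [h]; ext t; simp
  | cons s L ih =>
    simp only [List.map_cons, PTtensorList, List.foldr_cons, PTSat]
    constructor
    · rintro ⟨Z, W, rfl, ⟨hd, hne⟩, hW⟩
      rw [PTSat_descr] at hd
      have hZ : Z = {s} := by
        apply Set.eq_singleton_iff_nonempty_unique_mem.mpr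
        exact ⟨Set.nonempty_iff_ne_empty.mpr hne, hd⟩
      rw [hZ, (ih W).mp hW]
      ext t; simp
    · rintro rfl
      refine ⟨{s}, {t | t ∈ L}, ?_, ⟨?_, ?_⟩, (ih _).mpr rfl⟩
      · ext t; simp
      · rw [PTSat_descr]; simp
      · simp

/-- For a team `X` on a finite (nonempty) index set, a team `Y` satisfies
`Θ*_X` if and only if `Y = X`. -/
theorem thetaStar_characterizes_team (V : Type) [Fintype V] [Nonempty V]
    (X : Finset (V → Bool)) (Y : Set (V → Bool)) :
    PTSat Y (PTthetaStar X) ↔ Y = ↑X := by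
  rw [PTthetaStar, PTSat_thetaStar_list]
  have : {t | t ∈ X.toList} = (↑X : Set (V → Bool)) := by
    ext t; simp [Finset.mem_toList]
  rw [this]
end

section
/- Let N = {i₁,…,iₙ} be a finite set of indices and X a team on N. For every team Y on N, Y ⊨ Θ**_X if and only if Y = X or Y = ∅. -/
/- A description `PTdescr s` is satisfied exactly by the subteams of `{s}` (for nonempty `V`; over
an empty index set it is the empty conjunction `⊥`), so the only nonempty team satisfying it is
`{s}`. In a nonempty disjunction every disjunct must be witnessed by a nonempty part, hence `Θ**_X` forces all of `X` to be present and nothing else. -/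

section

variable {V : Type}

theorem ptSat_lit_iff (s : V → Bool) (i : V) (Y : Set (V → Bool)) :
    PTSat Y (PTlit s i) ↔ ∀ t ∈ Y, t i = s i := by
  unfold PTlit
  cases s i <;> simp [PTSat]

theorem ptSat_andAux_iff (φ : PTForm V) (l : List (PTForm V)) (Y : Set (V → Bool)) :
    PTSat Y (PTandAux φ l) ↔ ∀ ψ ∈ φ :: l, PTSat Y ψ := by
  induction l generalizing φ with
  | nil => simp [PTandAux]
  | cons ψ l ih => simp [PTandAux, PTSat, ih]

theorem ptSat_andList_iff {l : List (PTForm V)} (hl : l ≠ []) (Y : Set (V → Bool)) :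
    PTSat Y (PTandList l) ↔ ∀ ψ ∈ l, PTSat Y ψ := by
  obtain ⟨φ, l, rfl⟩ := List.exists_cons_of_ne_nil hl
  exact ptSat_andAux_iff φ l Y

theorem ptSat_nsor_iff_of_iff {φ ψ : PTForm V} {A B : Set (V → Bool)}
    (hA : A.Nonempty) (hB : B.Nonempty)
    (hφ : ∀ Y, PTSat Y φ ↔ Y = ∅ ∨ Y = A) (hψ : ∀ Y, PTSat Y ψ ↔ Y = ∅ ∨ Y = B)
    (Y : Set (V → Bool)) :
    PTSat Y (.nsor φ ψ) ↔ Y = ∅ ∨ Y = A ∪ B := by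
  simp only [PTSat, hφ, hψ]
  constructor
  · rintro (hY | ⟨Y₁, Y₂, rfl, hY₁, hY₂, rfl | rfl, rfl | rfl⟩)
    · exact .inl hY
    · exact absurd hY₁ Set.not_nonempty_empty
    · exact absurd hY₁ Set.not_nonempty_empty
    · exact absurd hY₂ Set.not_nonempty_empty
    · exact .inr rfl
  · rintro (hY | rfl)
    · exact .inl hY
    · exact .inr ⟨A, B, rfl, hA, hB, .inr rfl, .inr rfl⟩

end

section

variable {V : Type} [Fintype V] [Nonempty V]

theorem ptSat_descr_iff (s : V → Bool) (Y : Set (V → Bool)) :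
    PTSat Y (PTdescr s) ↔ Y = ∅ ∨ Y = {s} := by
  rw [← Set.subset_singleton_iff_eq, PTdescr,
    ptSat_andList_iff (by simp [Finset.univ_nonempty.ne_empty])]
  simp only [List.forall_mem_map, Finset.mem_toList, Finset.mem_univ, forall_const,
    ptSat_lit_iff]
  exact ⟨fun h t ht => funext fun i => h i t ht, fun h i t ht => by rw [h ht]⟩

theorem ptSat_nsorAux_descr_iff (s : V → Bool) (l : List (V → Bool)) (Y : Set (V → Bool)) :
    PTSat Y (PTnsorAux (PTdescr s) (l.map PTdescr)) ↔ Y = ∅ ∨ Y = {t | t ∈ s :: l} := by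
  induction l generalizing s Y with
  | nil => simpa [PTnsorAux] using ptSat_descr_iff s Y
  | cons u l ih =>
    have hunion : {t | t ∈ s :: u :: l} = {s} ∪ {t | t ∈ u :: l} := by
      ext t; simp
    rw [hunion]
    exact ptSat_nsor_iff_of_iff (Set.singleton_nonempty s) ⟨u, by simp⟩
      (ptSat_descr_iff s) (ih u) Y

theorem ptSat_nsorList_descr_iff (l : List (V → Bool)) (Y : Set (V → Bool)) :
    PTSat Y (PTnsorList (l.map PTdescr)) ↔ Y = ∅ ∨ Y = {t | t ∈ l} := by
  cases l with
  | nil => simp [PTnsorList, PTSat]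
  | cons s l => exact ptSat_nsorAux_descr_iff s l Y

end

/-- For a team `X` on a finite (nonempty) index set, a team `Y` satisfies
`Θ**_X` if and only if `Y = X` or `Y = ∅`. -/
theorem thetaSS_characterizes_team_or_empty (V : Type) [Fintype V] [Nonempty V]
    (X : Finset (V → Bool)) (Y : Set (V → Bool)) :
    PTSat Y (PTthetaSS X) ↔ Y = ↑X ∨ Y = ∅ := by
  have hX : {t | t ∈ X.toList} = (X : Set (V → Bool)) := by
    ext t; simp
  rw [PTthetaSS, ptSat_nsorList_descr_iff, hX, or_comm]
end
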